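/- arXiv:0704.1632 — 3 statements merged into one kernel-verified Lean document; each statement's English description precedes it below -/
import Mathlib

section
/- Let 0 < λ₁ ≤ ... ≤ λₙ, let φ₊ be a smooth (or formal) function with φ₊(x) = Σⱼ (λⱼ/2) xⱼ² + O(x³), and let L = ∇φ₊ · ∇ act on formal power series. Fix μ ∈ (0, 2λ₁) and set L_μ = L − μ. Then Ker L_μ ⊕ Im L_μ = ℂ⟦x⟧. Moreover: (1) dim Ker L_μ = n₁(μ) := #{j : λⱼ = μ}, and Ker L_μ has a basis (E_j)_{j: λⱼ=μ} with E_j(x) = x_j + O(x²); (2) a formal series F = F₀ + Σⱼ Fⱼ xⱼ + O(x²) belongs to Im L_μ if and only if Fⱼ = 0 for every j with λⱼ = μ. -/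
/-- Formal partial derivative `∂ⱼ` on formal power series:
`(∂ⱼ f)_d = (dⱼ + 1) f_{d + 1ⱼ}`. -/
noncomputable def fpd {n : ℕ} (j : Fin n) (f : MvPowerSeries (Fin n) ℂ) :
    MvPowerSeries (Fin n) ℂ :=
  fun d => ((d j : ℂ) + 1) * MvPowerSeries.coeff (d + Finsupp.single j 1) f

/-- The operator `L = ∇φ₊ · ∇` on formal power series. -/
noncomputable def Lop {n : ℕ} (φ : MvPowerSeries (Fin n) ℂ)
    (f : MvPowerSeries (Fin n) ℂ) : MvPowerSeries (Fin n) ℂ :=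
  ∑ j : Fin n, fpd j φ * fpd j f

/-- The operator `L_μ = L − μ`. -/
noncomputable def Lmu {n : ℕ} (φ : MvPowerSeries (Fin n) ℂ) (μ : ℝ)
    (f : MvPowerSeries (Fin n) ℂ) : MvPowerSeries (Fin n) ℂ :=
  Lop φ f - (μ : ℂ) • f

namespace KerImAux4

variable {n : ℕ}

def deg (d : Fin n →₀ ℕ) : ℕ := ∑ j, d j
lemma deg_eq (d : Fin n →₀ ℕ) : deg d = d.sum fun _ m => m := by
  rw [deg]; exact (Finsupp.sum_fintype d (fun _ m => m) (fun _ => rfl)).symm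
lemma deg_add (a b : Fin n →₀ ℕ) : deg (a + b) = deg a + deg b := by
  simp [deg, Finsupp.add_apply, Finset.sum_add_distrib]
lemma deg_single (j : Fin n) (k : ℕ) : deg (Finsupp.single j k) = k := by
  simp [deg, Finsupp.single_apply]

/-- the lower-order remainder -/
noncomputable def Rrem (φ : MvPowerSeries (Fin n) ℂ) (d : Fin n →₀ ℕ)
    (f : MvPowerSeries (Fin n) ℂ) : ℂ :=
  ∑ j : Fin n, ∑ p ∈ (Finset.HasAntidiagonal.antidiagonal d).filter (fun p => 2 ≤ deg p.1),
    ((p.1 j : ℂ) + 1) * MvPowerSeries.coeff (p.1 + Finsupp.single j 1) φ *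
      (((p.2 j : ℂ) + 1) * MvPowerSeries.coeff (p.2 + Finsupp.single j 1) f)

variable {lam : Fin n → ℝ} {φ : MvPowerSeries (Fin n) ℂ}

/-- φ-coefficient vanishing off the diagonal in low degree -/
lemma phi_low_vanish
    (hφlow : ∀ d : Fin n →₀ ℕ, (d.sum fun _ m => m) ≤ 2 →
      (¬ ∃ j : Fin n, d = Finsupp.single j 2) → MvPowerSeries.coeff d φ = 0)
    (j : Fin n) {a : Fin n →₀ ℕ} (ha : deg a ≤ 1)
    (hne : a ≠ Finsupp.single j 1) :
    MvPowerSeries.coeff (a + Finsupp.single j 1) φ = 0 := by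
  apply hφlow
  · rw [← deg_eq, deg_add, deg_single]
    omega
  · rintro ⟨i, hi⟩
    by_cases hij : i = j
    · subst hij
      apply hne
      have : a + Finsupp.single i 1 = Finsupp.single i 1 + Finsupp.single i 1 := by
        rw [hi, ← Finsupp.single_add]
      exact add_right_cancel this
    · have := DFunLike.congr_fun hi j
      rw [Finsupp.add_apply, Finsupp.single_apply, Finsupp.single_apply, if_pos rfl,
        if_neg hij] at this
      omega

lemma inner_sum
    (hφdiag : ∀ j : Fin n, MvPowerSeries.coeff (Finsupp.single j 2) φ = (lam j : ℂ) / 2)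
    (hφlow : ∀ d : Fin n →₀ ℕ, (d.sum fun _ m => m) ≤ 2 →
      (¬ ∃ j : Fin n, d = Finsupp.single j 2) → MvPowerSeries.coeff d φ = 0)
    (d : Fin n →₀ ℕ) (f : MvPowerSeries (Fin n) ℂ) (j : Fin n) :
    ∑ p ∈ Finset.HasAntidiagonal.antidiagonal d,
        ((p.1 j : ℂ) + 1) * MvPowerSeries.coeff (p.1 + Finsupp.single j 1) φ *
          (((p.2 j : ℂ) + 1) * MvPowerSeries.coeff (p.2 + Finsupp.single j 1) f)
      = (lam j : ℂ) * d j * MvPowerSeries.coeff d f +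
        ∑ p ∈ (Finset.HasAntidiagonal.antidiagonal d).filter (fun p => 2 ≤ deg p.1),
          ((p.1 j : ℂ) + 1) * MvPowerSeries.coeff (p.1 + Finsupp.single j 1) φ *
            (((p.2 j : ℂ) + 1) * MvPowerSeries.coeff (p.2 + Finsupp.single j 1) f) := by
  rw [← Finset.sum_filter_add_sum_filter_not (Finset.HasAntidiagonal.antidiagonal d) (fun p => 2 ≤ deg p.1)]
  have hlow : ∑ p ∈ (Finset.HasAntidiagonal.antidiagonal d).filter (fun p => ¬ 2 ≤ deg p.1),
      ((p.1 j : ℂ) + 1) * MvPowerSeries.coeff (p.1 + Finsupp.single j 1) φ *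
        (((p.2 j : ℂ) + 1) * MvPowerSeries.coeff (p.2 + Finsupp.single j 1) f)
      = (lam j : ℂ) * d j * MvPowerSeries.coeff d f := by
    by_cases hdj : d j = 0
    · rw [Finset.sum_eq_zero, hdj]
      · simp
      · intro p hp
        simp only [Finset.mem_filter, Finset.HasAntidiagonal.mem_antidiagonal, not_le] at hp
        have hp1 : p.1 ≠ Finsupp.single j 1 := by
          intro hc
          have := DFunLike.congr_fun hp.1 j
          rw [Finsupp.add_apply, hc, Finsupp.single_apply, if_pos rfl] at this
          omega
        rw [phi_low_vanish hφlow j (by omega) hp1]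
        ring
    · have h1 : (1 : ℕ) ≤ d j := Nat.one_le_iff_ne_zero.mpr hdj
      have hle : Finsupp.single j 1 ≤ d := by
        rw [Finsupp.single_le_iff]; exact h1
      set p₀ : (Fin n →₀ ℕ) × (Fin n →₀ ℕ) := (Finsupp.single j 1, d - Finsupp.single j 1) with hp₀
      have hmem : p₀ ∈ (Finset.HasAntidiagonal.antidiagonal d).filter (fun p => ¬ 2 ≤ deg p.1) := by
        rw [Finset.mem_filter, Finset.HasAntidiagonal.mem_antidiagonal]
        constructor
        · exact add_tsub_cancel_of_le hle
        · simp [hp₀, deg_single]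
      rw [Finset.sum_eq_single p₀]
      · -- value at p₀
        have e1 : (p₀.1 j : ℂ) + 1 = 2 := by simp [hp₀]; norm_num
        have e2 : p₀.1 + Finsupp.single j 1 = Finsupp.single j 2 := by
          simp [hp₀, ← Finsupp.single_add]
        have e3 : p₀.2 + Finsupp.single j 1 = d := tsub_add_cancel_of_le hle
        have e4 : (p₀.2 j : ℂ) + 1 = (d j : ℂ) := by
          have : p₀.2 j = d j - 1 := by simp [hp₀, Finsupp.tsub_apply]
          rw [this, Nat.cast_sub h1]
          ring
        rw [e1, e2, e3, e4, hφdiag j]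
        ring
      · intro p hp hne
        simp only [Finset.mem_filter, Finset.HasAntidiagonal.mem_antidiagonal, not_le] at hp
        have hp1 : p.1 ≠ Finsupp.single j 1 := by
          intro hc
          apply hne
          have hp2 : p.2 = d - Finsupp.single j 1 := by
            rw [← hp.1, hc]
            simp
          rw [hp₀]
          exact Prod.ext hc hp2
        rw [phi_low_vanish hφlow j (by omega) hp1]
        ring
      · intro hc
        exact absurd hmem hc
  rw [hlow]
  ring

/-- the master coefficient formula for `Lop` -/
lemma coeff_Lop
    (hφdiag : ∀ j : Fin n, MvPowerSeries.coeff (Finsupp.single j 2) φ = (lam j : ℂ) / 2)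
    (hφlow : ∀ d : Fin n →₀ ℕ, (d.sum fun _ m => m) ≤ 2 →
      (¬ ∃ j : Fin n, d = Finsupp.single j 2) → MvPowerSeries.coeff d φ = 0)
    (d : Fin n →₀ ℕ) (f : MvPowerSeries (Fin n) ℂ) :
    MvPowerSeries.coeff d (Lop φ f)
      = (∑ j, (lam j : ℂ) * d j) * MvPowerSeries.coeff d f + Rrem φ d f := by
  have hexp : MvPowerSeries.coeff d (Lop φ f)
      = ∑ j : Fin n, ∑ p ∈ Finset.HasAntidiagonal.antidiagonal d,
          ((p.1 j : ℂ) + 1) * MvPowerSeries.coeff (p.1 + Finsupp.single j 1) φ *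
            (((p.2 j : ℂ) + 1) * MvPowerSeries.coeff (p.2 + Finsupp.single j 1) f) := by
    rw [Lop, map_sum]
    refine Finset.sum_congr rfl fun j _ => ?_
    rw [MvPowerSeries.coeff_mul]
    rfl
  rw [hexp, Rrem]
  rw [Finset.sum_congr rfl (fun j _ => inner_sum hφdiag hφlow d f j)]
  rw [Finset.sum_add_distrib, Finset.sum_mul]

noncomputable def diagC (lam : Fin n → ℝ) (μ : ℝ) (d : Fin n →₀ ℕ) : ℂ :=
  ((∑ j, lam j * d j - μ : ℝ) : ℂ)

def Res (lam : Fin n → ℝ) (μ : ℝ) (d : Fin n →₀ ℕ) : Prop :=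
  ∃ j, d = Finsupp.single j 1 ∧ lam j = μ

/-- coefficient formula for `Lmu` -/
lemma coeff_Lmu {μ : ℝ}
    (hφdiag : ∀ j : Fin n, MvPowerSeries.coeff (Finsupp.single j 2) φ = (lam j : ℂ) / 2)
    (hφlow : ∀ d : Fin n →₀ ℕ, (d.sum fun _ m => m) ≤ 2 →
      (¬ ∃ j : Fin n, d = Finsupp.single j 2) → MvPowerSeries.coeff d φ = 0)
    (d : Fin n →₀ ℕ) (f : MvPowerSeries (Fin n) ℂ) :
    MvPowerSeries.coeff d (Lmu φ μ f)
      = diagC lam μ d * MvPowerSeries.coeff d f + Rrem φ d f := by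
  rw [Lmu, map_sub, map_smul, coeff_Lop hφdiag hφlow, diagC]
  push_cast
  simp only [smul_eq_mul]
  ring

/-- `Rrem` only depends on strictly lower-degree coefficients -/
lemma Rrem_congr {d : Fin n →₀ ℕ} {f g : MvPowerSeries (Fin n) ℂ}
    (h : ∀ e, deg e < deg d → MvPowerSeries.coeff e f = MvPowerSeries.coeff e g) :
    Rrem φ d f = Rrem φ d g := by
  rw [Rrem, Rrem]
  refine Finset.sum_congr rfl fun j _ => Finset.sum_congr rfl fun p hp => ?_
  simp only [Finset.mem_filter, Finset.HasAntidiagonal.mem_antidiagonal] at hp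
  have hdeg : deg (p.2 + Finsupp.single j 1) < deg d := by
    have h1 : deg p.1 + deg p.2 = deg d := by rw [← deg_add, hp.1]
    rw [deg_add, deg_single]
    omega
  rw [h _ hdeg]

lemma Rrem_zero (φ : MvPowerSeries (Fin n) ℂ) (d : Fin n →₀ ℕ) : Rrem φ d 0 = 0 := by
  simp [Rrem]

lemma Rrem_low {d : Fin n →₀ ℕ} (h : deg d ≤ 1) (f : MvPowerSeries (Fin n) ℂ) :
    Rrem φ d f = 0 := by
  rw [Rrem]
  refine Finset.sum_eq_zero fun j _ => Finset.sum_eq_zero fun p hp => ?_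
  simp only [Finset.mem_filter, Finset.HasAntidiagonal.mem_antidiagonal] at hp
  have h1 : deg p.1 + deg p.2 = deg d := by rw [← deg_add, hp.1]
  omega

open Classical in
/-- solve `L_μ G = F` recursively, with prescribed values `c` on the resonant monomials -/
noncomputable def solve (lam : Fin n → ℝ) (μ : ℝ) (φ : MvPowerSeries (Fin n) ℂ)
    (F : (Fin n →₀ ℕ) → ℂ) (c : Fin n → ℂ) : MvPowerSeries (Fin n) ℂ :=
  fun d =>
    if h : ∃ j, d = Finsupp.single j 1 ∧ lam j = μ then c h.choose
    else (F d - Rrem φ d (fun e =>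
        if he : deg e < deg d then solve lam μ φ F c e else 0)) / diagC lam μ d
termination_by d => deg d
decreasing_by exact he

lemma solve_unfold (lam : Fin n → ℝ) (μ : ℝ) (φ : MvPowerSeries (Fin n) ℂ)
    (F : (Fin n →₀ ℕ) → ℂ) (c : Fin n → ℂ) (d : Fin n →₀ ℕ) :
    solve lam μ φ F c d =
      if h : ∃ j, d = Finsupp.single j 1 ∧ lam j = μ then c h.choose
      else (F d - Rrem φ d (fun e =>
          if he : deg e < deg d then solve lam μ φ F c e else 0)) / diagC lam μ d := by
  rw [solve]

lemma eq_zero_of_deg_eq_zero {d : Fin n →₀ ℕ} (h : deg d = 0) : d = 0 := by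
  ext i
  exact (Finset.sum_eq_zero_iff.mp h) i (Finset.mem_univ i)

lemma exists_single_of_deg_eq_one {d : Fin n →₀ ℕ} (h : deg d = 1) :
    ∃ j, d = Finsupp.single j 1 := by
  have h1 : ∃ j, d j ≠ 0 := by
    by_contra hc
    push_neg at hc
    simp [deg, hc] at h
  obtain ⟨j, hj⟩ := h1
  have hle : d j ≤ 1 := by
    have h2 := Finset.single_le_sum (f := fun i => d i) (fun i _ => Nat.zero_le _)
      (Finset.mem_univ j)
    simp only [deg] at h
    omega
  have hdj : d j = 1 := by omega
  have hrest : ∀ i, i ≠ j → d i = 0 := by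
    intro i hi
    have hsplit := Finset.add_sum_erase Finset.univ (fun i => d i) (Finset.mem_univ j)
    have hz : ∑ i ∈ Finset.univ.erase j, d i = 0 := by
      have : deg d = d j + ∑ i ∈ Finset.univ.erase j, d i := by rw [deg, ← hsplit]
      omega
    exact Finset.sum_eq_zero_iff.mp hz i (by simp [hi])
  refine ⟨j, ?_⟩
  ext i
  by_cases hij : i = j
  · simp [hij, Finsupp.single_apply, hdj]
  · rw [Finsupp.single_apply, if_neg (by exact fun hh => hij hh.symm)]
    exact hrest i hij

lemma sumR_single (lam : Fin n → ℝ) (j : Fin n) :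
    (∑ i, lam i * ((Finsupp.single j 1 : Fin n →₀ ℕ) i : ℝ)) = lam j := by
  rw [Finset.sum_eq_single j]
  · simp
  · intro i _ hij
    simp [Finsupp.single_apply, Ne.symm hij]
  · simp

lemma diagC_single (lam : Fin n → ℝ) (μ : ℝ) (j : Fin n) :
    diagC lam μ (Finsupp.single j 1) = ((lam j - μ : ℝ) : ℂ) := by
  rw [diagC, sumR_single]

lemma sumR_ne {hn : 0 < n}
    (hpos : ∀ j, 0 < lam j) (hmono : Monotone lam)
    {μ : ℝ} (hμ0 : 0 < μ) (hμ : μ < 2 * lam ⟨0, hn⟩)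
    {d : Fin n →₀ ℕ} (hnr : ¬ Res lam μ d) :
    (∑ j, lam j * d j : ℝ) ≠ μ := by
  rcases Nat.lt_or_ge (deg d) 2 with hk | hk
  · interval_cases h : deg d
    · have hd0 : d = 0 := eq_zero_of_deg_eq_zero h
      subst hd0
      simpa using hμ0.ne
    · obtain ⟨j, rfl⟩ := exists_single_of_deg_eq_one h
      rw [sumR_single]
      intro hc
      exact hnr ⟨j, rfl, hc⟩
  · set lam0 := lam ⟨0, hn⟩ with hlam0
    have hl : ∀ j, lam0 ≤ lam j := fun j => hmono (by simp [Fin.le_def])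
    have hsum : lam0 * (deg d : ℝ) ≤ ∑ j, lam j * d j := by
      have h1 : ∑ j, lam0 * (d j : ℝ) ≤ ∑ j, lam j * (d j : ℝ) :=
        Finset.sum_le_sum fun j _ =>
          mul_le_mul_of_nonneg_right (hl j) (by positivity)
      calc lam0 * (deg d : ℝ) = ∑ j, lam0 * (d j : ℝ) := by
            rw [← Finset.mul_sum]
            congr 1
            rw [deg]
            push_cast
            ring
        _ ≤ _ := h1
    have h2 : (2 : ℝ) ≤ (deg d : ℝ) := by exact_mod_cast hk
    have hpos0 : 0 < lam0 := hpos _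
    nlinarith

lemma diagC_ne {hn : 0 < n}
    (hpos : ∀ j, 0 < lam j) (hmono : Monotone lam)
    {μ : ℝ} (hμ0 : 0 < μ) (hμ : μ < 2 * lam ⟨0, hn⟩)
    {d : Fin n →₀ ℕ} (hnr : ¬ Res lam μ d) :
    diagC lam μ d ≠ 0 := by
  rw [diagC]
  exact Complex.ofReal_ne_zero.mpr
    (sub_ne_zero.mpr (sumR_ne (hn := hn) hpos hmono hμ0 hμ hnr))

lemma solve_single_res (lam : Fin n → ℝ) (μ : ℝ) (φ : MvPowerSeries (Fin n) ℂ)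
    (F : (Fin n →₀ ℕ) → ℂ) (c : Fin n → ℂ) (j : Fin n) (hj : lam j = μ) :
    solve lam μ φ F c (Finsupp.single j 1) = c j := by
  have h : ∃ i, (Finsupp.single j 1 : Fin n →₀ ℕ) = Finsupp.single i 1 ∧ lam i = μ :=
    ⟨j, rfl, hj⟩
  rw [solve_unfold, dif_pos h]
  have hch : j = h.choose := by
    have := h.choose_spec.1
    rwa [Finsupp.single_left_inj (by norm_num)] at this
  rw [← hch]

lemma solve_nonres (lam : Fin n → ℝ) (μ : ℝ) (φ : MvPowerSeries (Fin n) ℂ)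
    (F : (Fin n →₀ ℕ) → ℂ) (c : Fin n → ℂ) {d : Fin n →₀ ℕ} (h : ¬ Res lam μ d) :
    solve lam μ φ F c d
      = (F d - Rrem φ d (fun e =>
          if he : deg e < deg d then solve lam μ φ F c e else 0)) / diagC lam μ d := by
  rw [solve_unfold]
  exact dif_neg h

/-- value of `solve` at low degree non-resonant indices -/
lemma solve_nonres_low (lam : Fin n → ℝ) (μ : ℝ) (φ : MvPowerSeries (Fin n) ℂ)
    (F : (Fin n →₀ ℕ) → ℂ) (c : Fin n → ℂ) {d : Fin n →₀ ℕ} (h : ¬ Res lam μ d)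
    (hd : deg d ≤ 1) :
    solve lam μ φ F c d = F d / diagC lam μ d := by
  rw [solve_nonres lam μ φ F c h]
  erw [Rrem_low hd, sub_zero]

variable {μ : ℝ}

open Classical in
/-- main property of `solve`: it inverts `L_μ` off the resonant set -/
lemma coeff_Lmu_solve {hn : 0 < n}
    (hpos : ∀ j, 0 < lam j) (hmono : Monotone lam)
    (hμ0 : 0 < μ) (hμ : μ < 2 * lam ⟨0, hn⟩)
    (hφdiag : ∀ j : Fin n, MvPowerSeries.coeff (Finsupp.single j 2) φ = (lam j : ℂ) / 2)
    (hφlow : ∀ d : Fin n →₀ ℕ, (d.sum fun _ m => m) ≤ 2 →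
      (¬ ∃ j : Fin n, d = Finsupp.single j 2) → MvPowerSeries.coeff d φ = 0)
    (F : (Fin n →₀ ℕ) → ℂ) (c : Fin n → ℂ) (d : Fin n →₀ ℕ) :
    MvPowerSeries.coeff d (Lmu φ μ (solve lam μ φ F c))
      = if Res lam μ d then 0 else F d := by
  rw [coeff_Lmu hφdiag hφlow]
  by_cases h : Res lam μ d
  · rw [if_pos h]
    obtain ⟨j, rfl, hj⟩ := h
    rw [Rrem_low (by rw [deg_single]), diagC_single, hj, sub_self]
    simp
  · rw [if_neg h]
    have hne : diagC lam μ d ≠ 0 := diagC_ne (hn := hn) hpos hmono hμ0 hμ h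
    have hsol : MvPowerSeries.coeff d (solve lam μ φ F c)
        = (F d - Rrem φ d (fun e =>
            if he : deg e < deg d then solve lam μ φ F c e else 0)) / diagC lam μ d :=
      solve_nonres lam μ φ F c h
    have hR : Rrem φ d (fun e => if he : deg e < deg d then solve lam μ φ F c e else 0)
        = Rrem φ d (solve lam μ φ F c) := by
      apply Rrem_congr
      intro e he
      show (if he : deg e < deg d then solve lam μ φ F c e else 0) = solve lam μ φ F c e
      rw [dif_pos he]
    rw [hsol, hR, mul_div_cancel₀ _ hne]
    ring

/-- a kernel element vanishing on the resonant monomials is zero -/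
lemma ker_unique {hn : 0 < n}
    (hpos : ∀ j, 0 < lam j) (hmono : Monotone lam)
    (hμ0 : 0 < μ) (hμ : μ < 2 * lam ⟨0, hn⟩)
    (hφdiag : ∀ j : Fin n, MvPowerSeries.coeff (Finsupp.single j 2) φ = (lam j : ℂ) / 2)
    (hφlow : ∀ d : Fin n →₀ ℕ, (d.sum fun _ m => m) ≤ 2 →
      (¬ ∃ j : Fin n, d = Finsupp.single j 2) → MvPowerSeries.coeff d φ = 0)
    (f : MvPowerSeries (Fin n) ℂ) (hf : Lmu φ μ f = 0)
    (h0 : ∀ j, lam j = μ → MvPowerSeries.coeff (Finsupp.single j 1) f = 0) :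
    f = 0 := by
  have key : ∀ k, ∀ d : Fin n →₀ ℕ, deg d = k → MvPowerSeries.coeff d f = 0 := by
    intro k
    induction k using Nat.strong_induction_on with
    | _ k ih =>
      intro d hd
      have hc : MvPowerSeries.coeff d (Lmu φ μ f) = 0 := by rw [hf]; simp
      rw [coeff_Lmu hφdiag hφlow] at hc
      have hR : Rrem φ d f = 0 := by
        rw [Rrem_congr (g := 0) ?_, Rrem_zero]
        intro e he
        rw [ih (deg e) (by omega) e rfl]
        simp
      by_cases hres : Res lam μ d
      · obtain ⟨j, rfl, hj⟩ := hres
        exact h0 j hj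
      · have hne : diagC lam μ d ≠ 0 := diagC_ne (hn := hn) hpos hmono hμ0 hμ hres
        rw [hR, add_zero] at hc
        exact (mul_eq_zero.mp hc).resolve_left hne
  ext d
  rw [key (deg d) d rfl]
  simp

lemma fpd_add (j : Fin n) (f g : MvPowerSeries (Fin n) ℂ) :
    fpd j (f + g) = fpd j f + fpd j g := by
  funext e
  show ((e j : ℂ) + 1) * MvPowerSeries.coeff (e + Finsupp.single j 1) (f + g)
    = fpd j f e + fpd j g e
  rw [map_add]
  show _ = ((e j : ℂ) + 1) * MvPowerSeries.coeff (e + Finsupp.single j 1) f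
    + ((e j : ℂ) + 1) * MvPowerSeries.coeff (e + Finsupp.single j 1) g
  ring

lemma fpd_sub (j : Fin n) (f g : MvPowerSeries (Fin n) ℂ) :
    fpd j (f - g) = fpd j f - fpd j g := by
  funext e
  show ((e j : ℂ) + 1) * MvPowerSeries.coeff (e + Finsupp.single j 1) (f - g)
    = fpd j f e - fpd j g e
  rw [map_sub]
  show _ = ((e j : ℂ) + 1) * MvPowerSeries.coeff (e + Finsupp.single j 1) f
    - ((e j : ℂ) + 1) * MvPowerSeries.coeff (e + Finsupp.single j 1) g
  ring

lemma fpd_smul (j : Fin n) (a : ℂ) (f : MvPowerSeries (Fin n) ℂ) :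
    fpd j (a • f) = a • fpd j f := by
  funext e
  show ((e j : ℂ) + 1) * MvPowerSeries.coeff (e + Finsupp.single j 1) (a • f)
    = a • fpd j f e
  rw [map_smul]
  show _ = a * (((e j : ℂ) + 1) * MvPowerSeries.coeff (e + Finsupp.single j 1) f)
  simp only [smul_eq_mul]
  ring

lemma Lmu_add (φ : MvPowerSeries (Fin n) ℂ) (μ : ℝ) (f g : MvPowerSeries (Fin n) ℂ) :
    Lmu φ μ (f + g) = Lmu φ μ f + Lmu φ μ g := by
  rw [Lmu, Lmu, Lmu, Lop, Lop, Lop]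
  simp only [fpd_add, mul_add, Finset.sum_add_distrib, smul_add]
  abel

lemma Lmu_sub (φ : MvPowerSeries (Fin n) ℂ) (μ : ℝ) (f g : MvPowerSeries (Fin n) ℂ) :
    Lmu φ μ (f - g) = Lmu φ μ f - Lmu φ μ g := by
  rw [Lmu, Lmu, Lmu, Lop, Lop, Lop]
  simp only [fpd_sub, mul_sub, Finset.sum_sub_distrib, smul_sub]
  abel

lemma Lmu_smul (φ : MvPowerSeries (Fin n) ℂ) (μ : ℝ) (a : ℂ) (f : MvPowerSeries (Fin n) ℂ) :
    Lmu φ μ (a • f) = a • Lmu φ μ f := by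
  rw [Lmu, Lmu, Lop, Lop]
  simp only [fpd_smul, mul_smul_comm]
  rw [← Finset.smul_sum, smul_sub, smul_comm ((μ : ℂ)) a f]

lemma Lmu_zero (φ : MvPowerSeries (Fin n) ℂ) (μ : ℝ) : Lmu φ μ 0 = 0 := by
  have := Lmu_smul φ μ 0 0
  simpa using this

lemma Lmu_sum (φ : MvPowerSeries (Fin n) ℂ) (μ : ℝ) {ι : Type*} [DecidableEq ι] (s : Finset ι)
    (g : ι → MvPowerSeries (Fin n) ℂ) :
    Lmu φ μ (∑ i ∈ s, g i) = ∑ i ∈ s, Lmu φ μ (g i) := by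
  induction s using Finset.induction_on with
  | empty => simpa using Lmu_zero φ μ
  | insert _ _ hni ih =>
    rw [Finset.sum_insert hni, Finset.sum_insert hni, Lmu_add, ih]

/-- the kernel basis elements -/
noncomputable def Efam (lam : Fin n → ℝ) (μ : ℝ) (φ : MvPowerSeries (Fin n) ℂ)
    (j : Fin n) : MvPowerSeries (Fin n) ℂ :=
  solve lam μ φ 0 (fun i => if i = j then 1 else 0)

lemma Lmu_Efam {hn : 0 < n}
    (hpos : ∀ j, 0 < lam j) (hmono : Monotone lam)
    (hμ0 : 0 < μ) (hμ : μ < 2 * lam ⟨0, hn⟩)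
    (hφdiag : ∀ j : Fin n, MvPowerSeries.coeff (Finsupp.single j 2) φ = (lam j : ℂ) / 2)
    (hφlow : ∀ d : Fin n →₀ ℕ, (d.sum fun _ m => m) ≤ 2 →
      (¬ ∃ j : Fin n, d = Finsupp.single j 2) → MvPowerSeries.coeff d φ = 0)
    (j : Fin n) : Lmu φ μ (Efam lam μ φ j) = 0 := by
  ext d
  rw [Efam, coeff_Lmu_solve (hn := hn) hpos hmono hμ0 hμ hφdiag hφlow]
  split <;> simp

lemma coeff_Efam_res (i j : Fin n) (hi : lam i = μ) (φ : MvPowerSeries (Fin n) ℂ) :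
    MvPowerSeries.coeff (Finsupp.single i 1) (Efam lam μ φ j)
      = if i = j then 1 else 0 :=
  solve_single_res lam μ φ 0 _ i hi

lemma nonres_single {i : Fin n} (hi : lam i ≠ μ) : ¬ Res lam μ (Finsupp.single i 1) := by
  rintro ⟨k, hk, hkμ⟩
  rw [Finsupp.single_left_inj (by norm_num)] at hk
  exact hi (hk ▸ hkμ)

lemma coeff_Efam_nonres (i j : Fin n) (hi : lam i ≠ μ) (φ : MvPowerSeries (Fin n) ℂ) :
    MvPowerSeries.coeff (Finsupp.single i 1) (Efam lam μ φ j) = 0 := by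
  show Efam lam μ φ j (Finsupp.single i 1) = 0
  rw [Efam, solve_nonres_low lam μ φ 0 _ (nonres_single hi) (by rw [deg_single])]
  simp

lemma coeff_Efam_zero (j : Fin n) (φ : MvPowerSeries (Fin n) ℂ) :
    MvPowerSeries.coeff 0 (Efam lam μ φ j) = 0 := by
  have h0 : ¬ Res lam μ (0 : Fin n →₀ ℕ) := by
    rintro ⟨k, hk, -⟩
    have := DFunLike.congr_fun hk k
    simp at this
  show Efam lam μ φ j 0 = 0
  rw [Efam, solve_nonres_low lam μ φ 0 _ h0 (by simp [deg])]
  simp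

lemma coeff_sum_smul_Efam (c : Fin n → ℂ) (j : Fin n) (hj : lam j = μ)
    (φ : MvPowerSeries (Fin n) ℂ) :
    MvPowerSeries.coeff (Finsupp.single j 1) (∑ i, c i • Efam lam μ φ i) = c j := by
  rw [map_sum]
  rw [Finset.sum_congr rfl (fun i _ => by
    rw [map_smul, coeff_Efam_res j i hj φ, smul_eq_mul])]
  simp [mul_ite, Finset.sum_ite_eq]

/-- every kernel element is the canonical combination of the `Efam` -/
lemma ker_repr {hn : 0 < n}
    (hpos : ∀ j, 0 < lam j) (hmono : Monotone lam)
    (hμ0 : 0 < μ) (hμ : μ < 2 * lam ⟨0, hn⟩)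
    (hφdiag : ∀ j : Fin n, MvPowerSeries.coeff (Finsupp.single j 2) φ = (lam j : ℂ) / 2)
    (hφlow : ∀ d : Fin n →₀ ℕ, (d.sum fun _ m => m) ≤ 2 →
      (¬ ∃ j : Fin n, d = Finsupp.single j 2) → MvPowerSeries.coeff d φ = 0)
    (f : MvPowerSeries (Fin n) ℂ) (hf : Lmu φ μ f = 0) (c : Fin n → ℂ)
    (hc : ∀ j, c j = if lam j = μ then MvPowerSeries.coeff (Finsupp.single j 1) f else 0) :
    f = ∑ j, c j • Efam lam μ φ j := by
  have hK : Lmu φ μ (∑ j, c j • Efam lam μ φ j) = 0 := by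
    rw [Lmu_sum]
    refine Finset.sum_eq_zero fun j _ => ?_
    rw [Lmu_smul, Lmu_Efam (hn := hn) hpos hmono hμ0 hμ hφdiag hφlow j, smul_zero]
  have hg : f - ∑ j, c j • Efam lam μ φ j = 0 := by
    apply ker_unique (hn := hn) hpos hmono hμ0 hμ hφdiag hφlow
    · rw [Lmu_sub, hf, hK, sub_zero]
    · intro j hj
      rw [map_sub, coeff_sum_smul_Efam c j hj φ, hc j, if_pos hj, sub_self]
  rw [← sub_eq_zero]
  exact hg

end KerImAux4

open KerImAux4

/-- for `φ₊ = Σⱼ (λⱼ/2)xⱼ² + O(x³)`, `L = ∇φ₊·∇` and `μ ∈ (0, 2λ₁)`,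
one has `Ker L_μ ⊕ Im L_μ = ℂ⟦x⟧`; `Ker L_μ` has a basis `(Eⱼ)_{λⱼ = μ}` with
`Eⱼ = xⱼ + O(x²)` (so `dim Ker L_μ = n₁(μ)`); and `F = F₀ + Σ Fⱼxⱼ + O(x²) ∈ Im L_μ`
iff `Fⱼ = 0` for every `j` with `λⱼ = μ`. -/
theorem ker_im_decomposition_Lmu
    {n : ℕ} (hn : 0 < n) (lam : Fin n → ℝ)
    (hpos : ∀ j, 0 < lam j) (hmono : Monotone lam)
    (μ : ℝ) (hμ0 : 0 < μ) (hμ : μ < 2 * lam ⟨0, hn⟩)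
    (φ : MvPowerSeries (Fin n) ℂ)
    (hφdiag : ∀ j : Fin n, MvPowerSeries.coeff (Finsupp.single j 2) φ = (lam j : ℂ) / 2)
    (hφlow : ∀ d : Fin n →₀ ℕ, (d.sum fun _ m => m) ≤ 2 →
      (¬ ∃ j : Fin n, d = Finsupp.single j 2) → MvPowerSeries.coeff d φ = 0) :
    -- Ker L_μ ⊕ Im L_μ = ℂ⟦x⟧
    (∀ F : MvPowerSeries (Fin n) ℂ,
      ∃! p : MvPowerSeries (Fin n) ℂ × MvPowerSeries (Fin n) ℂ,
        Lmu φ μ p.1 = 0 ∧ (∃ G, Lmu φ μ G = p.2) ∧ F = p.1 + p.2) ∧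
    -- basis of the kernel indexed by {j : λⱼ = μ}
    (∃ E : Fin n → MvPowerSeries (Fin n) ℂ,
      (∀ j : Fin n, lam j = μ →
        Lmu φ μ (E j) = 0 ∧
        MvPowerSeries.coeff (Finsupp.single j 1) (E j) = 1 ∧
        (∀ i : Fin n, i ≠ j → MvPowerSeries.coeff (Finsupp.single i 1) (E j) = 0) ∧
        MvPowerSeries.coeff 0 (E j) = 0) ∧
      ∀ f : MvPowerSeries (Fin n) ℂ, Lmu φ μ f = 0 →
        ∃! c : Fin n → ℂ, (∀ j, lam j ≠ μ → c j = 0) ∧ f = ∑ j : Fin n, c j • E j) ∧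
    -- characterization of the image
    (∀ F : MvPowerSeries (Fin n) ℂ,
      (∃ G, Lmu φ μ G = F) ↔
        ∀ j : Fin n, lam j = μ → MvPowerSeries.coeff (Finsupp.single j 1) F = 0) := by
  -- image characterization, proved first since it is used in the decomposition
  have himage : ∀ F : MvPowerSeries (Fin n) ℂ,
      (∃ G, Lmu φ μ G = F) ↔
        ∀ j : Fin n, lam j = μ → MvPowerSeries.coeff (Finsupp.single j 1) F = 0 := by
    intro F
    constructor
    · rintro ⟨G, rfl⟩ j hj
      rw [coeff_Lmu hφdiag hφlow, Rrem_low (by rw [deg_single]), diagC_single, hj, sub_self]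
      simp
    · intro hF
      refine ⟨solve lam μ φ (fun d => MvPowerSeries.coeff d F) 0, ?_⟩
      ext d
      rw [coeff_Lmu_solve (hn := hn) hpos hmono hμ0 hμ hφdiag hφlow]
      by_cases h : Res lam μ d
      · rw [if_pos h]
        obtain ⟨j, rfl, hj⟩ := h
        exact (hF j hj).symm
      · rw [if_neg h]
  -- properties of the kernel basis elements
  have hEker : ∀ j, Lmu φ μ (Efam lam μ φ j) = 0 :=
    Lmu_Efam (hn := hn) hpos hmono hμ0 hμ hφdiag hφlow
  have hEcoeff : ∀ i j : Fin n, lam i = μ →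
      MvPowerSeries.coeff (Finsupp.single i 1) (Efam lam μ φ j)
        = if i = j then 1 else 0 := fun i j hi => coeff_Efam_res i j hi φ
  refine ⟨?_, ⟨Efam lam μ φ, ?_, ?_⟩, himage⟩
  · -- decomposition
    intro F
    set c : Fin n → ℂ := fun j =>
      if lam j = μ then MvPowerSeries.coeff (Finsupp.single j 1) F else 0 with hc
    set K : MvPowerSeries (Fin n) ℂ := ∑ j, c j • Efam lam μ φ j with hKdef
    have hK : Lmu φ μ K = 0 := by
      rw [hKdef, Lmu_sum]
      exact Finset.sum_eq_zero fun j _ => by rw [Lmu_smul, hEker j, smul_zero]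
    have hMcoeff : ∀ j, lam j = μ →
        MvPowerSeries.coeff (Finsupp.single j 1) (F - K) = 0 := by
      intro j hj
      rw [map_sub, hKdef, coeff_sum_smul_Efam c j hj φ, hc]
      simp [hj]
    refine ⟨(K, F - K), ⟨hK, (himage (F - K)).mpr hMcoeff, by ring⟩, ?_⟩
    rintro ⟨k, m⟩ ⟨hk, hmim, hFsum⟩
    simp only at hk hmim hFsum
    have hm : ∀ j, lam j = μ → MvPowerSeries.coeff (Finsupp.single j 1) m = 0 :=
      (himage m).mp hmim
    have hkF : ∀ j, lam j = μ →
        MvPowerSeries.coeff (Finsupp.single j 1) k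
          = MvPowerSeries.coeff (Finsupp.single j 1) F := by
      intro j hj
      rw [hFsum, map_add, hm j hj, add_zero]
    have hkK : k = K := by
      rw [hKdef]
      apply ker_repr (hn := hn) hpos hmono hμ0 hμ hφdiag hφlow k hk c
      intro j
      by_cases hj : lam j = μ
      · rw [hc]
        simp only [if_pos hj]
        exact (hkF j hj).symm
      · rw [hc]
        simp [hj]
    have hmM : m = F - K := by
      rw [← hkK, hFsum]
      ring
    exact Prod.ext hkK hmM
  · -- basis element properties
    intro j hj
    refine ⟨hEker j, ?_, ?_, coeff_Efam_zero j φ⟩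
    · rw [hEcoeff j j hj, if_pos rfl]
    · intro i hij
      by_cases hi : lam i = μ
      · rw [hEcoeff i j hi, if_neg hij]
      · exact coeff_Efam_nonres i j hi φ
  · -- kernel representation
    intro f hf
    set c : Fin n → ℂ := fun j =>
      if lam j = μ then MvPowerSeries.coeff (Finsupp.single j 1) f else 0 with hc
    refine ⟨c, ⟨fun j hj => by rw [hc]; simp [hj], ?_⟩, ?_⟩
    · exact ker_repr (hn := hn) hpos hmono hμ0 hμ hφdiag hφlow f hf c (fun j => rfl)
    · rintro c' ⟨hc'0, hc'⟩
      funext j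
      by_cases hj : lam j = μ
      · have h1 : MvPowerSeries.coeff (Finsupp.single j 1) f = c' j := by
          rw [hc']
          exact coeff_sum_smul_Efam c' j hj φ
        rw [hc]
        simp only [if_pos hj]
        exact h1.symm
      · rw [hc'0 j hj, hc]
        simp [hj]
end

section
/- With L_μ = L − μ as above and μ = 2λ₁, one has Ker L_μ ∩ Im(L_μ)² = {0} in ℂ⟦x⟧: if a formal series E satisfies L_μ E = 0 and E = L_μ² G for some formal series G, then E = 0. -/
lemma coeff_fpd {n : ℕ} (j : Fin n) (g : MvPowerSeries (Fin n) ℂ) (d : Fin n →₀ ℕ) :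
    MvPowerSeries.coeff d (fpd j g)
      = ((d j : ℂ) + 1) * MvPowerSeries.coeff (d + Finsupp.single j 1) g := rfl

lemma deg_add {n : ℕ} (a b : Fin n →₀ ℕ) :
    ((a + b).sum fun _ m => m) = (a.sum fun _ m => m) + (b.sum fun _ m => m) :=
  Finsupp.sum_add_index' (fun _ => rfl) (fun _ _ _ => rfl)

lemma deg_single {n : ℕ} (j : Fin n) (k : ℕ) :
    ((Finsupp.single j k).sum fun _ m => m) = k := Finsupp.sum_single_index rfl

lemma lop_coeff {n : ℕ} (lam : Fin n → ℝ) (φ f : MvPowerSeries (Fin n) ℂ)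
    (hφdiag : ∀ j : Fin n, MvPowerSeries.coeff (Finsupp.single j 2) φ = (lam j : ℂ) / 2)
    (hφlow : ∀ d : Fin n →₀ ℕ, (d.sum fun _ m => m) ≤ 2 →
      (¬ ∃ j : Fin n, d = Finsupp.single j 2) → MvPowerSeries.coeff d φ = 0)
    (α : Fin n →₀ ℕ)
    (hf : ∀ δ : Fin n →₀ ℕ, 1 ≤ (δ.sum fun _ m => m) → (δ.sum fun _ m => m) < (α.sum fun _ m => m) →
      MvPowerSeries.coeff δ f = 0) :
    MvPowerSeries.coeff α (Lop φ f)
      = (∑ j : Fin n, (lam j : ℂ) * (α j : ℂ)) * MvPowerSeries.coeff α f := by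
  unfold Lop
  rw [map_sum, Finset.sum_mul]
  apply Finset.sum_congr rfl
  intro j _
  rw [MvPowerSeries.coeff_mul]
  have hterm : ∀ p ∈ Finset.HasAntidiagonal.antidiagonal α, p.1 ≠ Finsupp.single j 1 →
      MvPowerSeries.coeff p.1 (fpd j φ) * MvPowerSeries.coeff p.2 (fpd j f) = 0 := by
    intro p hp hne
    rw [Finset.HasAntidiagonal.mem_antidiagonal] at hp
    by_cases hdeg : (p.1.sum fun _ m => m) ≤ 1
    · have hz : MvPowerSeries.coeff (p.1 + Finsupp.single j 1) φ = 0 := by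
        apply hφlow
        · rw [deg_add, deg_single]; omega
        · rintro ⟨i, hi⟩
          by_cases hij : i = j
          · subst hij
            apply hne
            have h2 : Finsupp.single i 2 = Finsupp.single i 1 + Finsupp.single i 1 := by
              rw [← Finsupp.single_add]
            rw [h2] at hi
            exact add_right_cancel hi
          · have hji : j ≠ i := fun h => hij h.symm
            have := DFunLike.congr_fun hi j
            rw [Finsupp.add_apply, Finsupp.single_eq_same,
              Finsupp.single_eq_of_ne hji] at this
            omega
      rw [coeff_fpd, coeff_fpd, hz]
      ring
    · have hz : MvPowerSeries.coeff (p.2 + Finsupp.single j 1) f = 0 := by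
        apply hf
        · rw [deg_add, deg_single]; omega
        · have := deg_add p.1 p.2
          rw [hp] at this
          rw [deg_add, deg_single]
          omega
      rw [coeff_fpd, coeff_fpd, hz]
      ring
  by_cases hαj : α j = 0
  · rw [Finset.sum_eq_zero, hαj]
    · push_cast; ring
    · intro p hp
      apply hterm p hp
      intro h
      rw [Finset.HasAntidiagonal.mem_antidiagonal] at hp
      have h1 := DFunLike.congr_fun hp j
      rw [Finsupp.add_apply, h, Finsupp.single_eq_same] at h1
      omega
  · have hle : Finsupp.single j 1 ≤ α := Finsupp.single_le_iff.mpr (by omega)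
    have hmem : (Finsupp.single j 1, α - Finsupp.single j 1) ∈ Finset.HasAntidiagonal.antidiagonal α := by
      rw [Finset.HasAntidiagonal.mem_antidiagonal]; exact add_tsub_cancel_of_le hle
    rw [Finset.sum_eq_single_of_mem _ hmem]
    · rw [coeff_fpd, coeff_fpd]
      have h2 : (α - Finsupp.single j 1) + Finsupp.single j 1 = α := tsub_add_cancel_of_le hle
      rw [h2]
      have h3 : Finsupp.single j 1 + Finsupp.single j 1 = Finsupp.single j 2 := by
        rw [← Finsupp.single_add]
      rw [h3, hφdiag j, Finsupp.single_eq_same]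
      have h4 : (α - Finsupp.single j 1 : Fin n →₀ ℕ) j = α j - 1 := by
        rw [Finsupp.tsub_apply, Finsupp.single_eq_same]
      rw [h4]
      have h5 : ((α j - 1 : ℕ) : ℂ) + 1 = (α j : ℂ) := by
        rw [Nat.cast_sub (by omega)]; ring
      rw [h5]
      push_cast
      ring
    · intro p hp hne
      apply hterm p hp
      intro h1
      apply hne
      rw [Finset.HasAntidiagonal.mem_antidiagonal] at hp
      have h2 : p.2 = α - Finsupp.single j 1 := by
        rw [← h1]
        exact eq_tsub_of_add_eq (by rw [add_comm]; exact hp)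
      exact Prod.ext h1 h2

/-- with `L_μ = L − 2λ₁`, one has `Ker L_μ ∩ Im (L_μ)² = {0}`:
if `L_μ E = 0` and `E = L_μ² G` for some formal series `G`, then `E = 0`. -/
theorem ker_inter_im_sq_eq_bot
    {n : ℕ} (hn : 0 < n) (lam : Fin n → ℝ)
    (hpos : ∀ j, 0 < lam j) (hmono : Monotone lam)
    (φ : MvPowerSeries (Fin n) ℂ)
    (hφdiag : ∀ j : Fin n, MvPowerSeries.coeff (Finsupp.single j 2) φ = (lam j : ℂ) / 2)
    (hφlow : ∀ d : Fin n →₀ ℕ, (d.sum fun _ m => m) ≤ 2 →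
      (¬ ∃ j : Fin n, d = Finsupp.single j 2) → MvPowerSeries.coeff d φ = 0)
    (E : MvPowerSeries (Fin n) ℂ)
    (hker : Lmu φ (2 * lam ⟨0, hn⟩) E = 0)
    (him : ∃ G : MvPowerSeries (Fin n) ℂ, E = Lmu φ (2 * lam ⟨0, hn⟩) (Lmu φ (2 * lam ⟨0, hn⟩) G)) :
    E = 0 := by
  obtain ⟨G, hG⟩ := him
  set μ : ℝ := 2 * lam ⟨0, hn⟩ with hμ
  set F : MvPowerSeries (Fin n) ℂ := Lmu φ μ G with hF
  set c : (Fin n →₀ ℕ) → ℂ := fun α => (∑ j : Fin n, (lam j : ℂ) * (α j : ℂ)) - (μ : ℂ) with hc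
  have key : ∀ (f : MvPowerSeries (Fin n) ℂ) (α : Fin n →₀ ℕ),
      (∀ δ : Fin n →₀ ℕ, 1 ≤ (δ.sum fun _ m => m) →
        (δ.sum fun _ m => m) < (α.sum fun _ m => m) → MvPowerSeries.coeff δ f = 0) →
      MvPowerSeries.coeff α (Lmu φ μ f) = c α * MvPowerSeries.coeff α f := by
    intro f α hf
    unfold Lmu
    rw [map_sub, map_smul, lop_coeff lam φ f hφdiag hφlow α hf]
    simp only [hc, smul_eq_mul]
    ring
  have hc2 : ∀ α : Fin n →₀ ℕ, c α = 0 → (α.sum fun _ m => m) ≤ 2 := by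
    intro α hcα
    by_contra hgt
    push_neg at hgt
    have hcast : c α = (((∑ j : Fin n, lam j * (α j : ℝ)) - μ : ℝ) : ℂ) := by
      simp only [hc]
      push_cast
      ring
    rw [hcast, Complex.ofReal_eq_zero] at hcα
    have hdeg : ((α.sum fun _ m => m : ℕ) : ℝ) ≥ 3 := by exact_mod_cast hgt
    have h1 : lam ⟨0, hn⟩ * ((α.sum fun _ m => m : ℕ) : ℝ) ≤ ∑ j : Fin n, lam j * (α j : ℝ) := by
      rw [Finsupp.sum_fintype _ _ (fun _ => rfl)]
      push_cast
      rw [Finset.mul_sum]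
      apply Finset.sum_le_sum
      intro i _
      exact mul_le_mul_of_nonneg_right (hmono (by simp [Fin.le_def])) (Nat.cast_nonneg _)
    have hp := hpos ⟨0, hn⟩
    nlinarith
  have hker' : ∀ α : Fin n →₀ ℕ, MvPowerSeries.coeff α (Lmu φ μ E) = 0 := by
    intro α; rw [hker]; simp
  have hF01 : ∀ α : Fin n →₀ ℕ, (α.sum fun _ m => m) ≤ 1 → MvPowerSeries.coeff α F = 0 := by
    intro α hα
    have vac : ∀ (f : MvPowerSeries (Fin n) ℂ), ∀ δ : Fin n →₀ ℕ,
        1 ≤ (δ.sum fun _ m => m) → (δ.sum fun _ m => m) < (α.sum fun _ m => m) →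
        MvPowerSeries.coeff δ f = 0 := fun f δ h1 h2 => False.elim (by omega)
    have hFα : MvPowerSeries.coeff α F = c α * MvPowerSeries.coeff α G := key G α (vac G)
    have hEα : MvPowerSeries.coeff α E = c α * MvPowerSeries.coeff α F := by
      have := key F α (vac F)
      rw [← hG] at this
      exact this
    have h0 : c α * MvPowerSeries.coeff α E = 0 := by
      rw [← key E α (vac E)]; exact hker' α
    by_cases hcα : c α = 0
    · rw [hFα, hcα, zero_mul]
    · have hE0 : MvPowerSeries.coeff α E = 0 := (mul_eq_zero.mp h0).resolve_left hcα
      rw [hE0] at hEα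
      exact ((mul_eq_zero.mp hEα.symm).resolve_left hcα)
  have hEall : ∀ k : ℕ, ∀ α : Fin n →₀ ℕ, (α.sum fun _ m => m) = k →
      MvPowerSeries.coeff α E = 0 := by
    intro k
    induction k using Nat.strong_induction_on with
    | _ k IH =>
      intro α hα
      have hfE : ∀ δ : Fin n →₀ ℕ, 1 ≤ (δ.sum fun _ m => m) →
          (δ.sum fun _ m => m) < (α.sum fun _ m => m) → MvPowerSeries.coeff δ E = 0 := by
        intro δ _ h2
        exact IH _ (by omega) δ rfl
      have h0 : c α * MvPowerSeries.coeff α E = 0 := by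
        rw [← key E α hfE]; exact hker' α
      by_cases hcα : c α = 0
      · have hα2 : (α.sum fun _ m => m) ≤ 2 := hc2 α hcα
        have hEα : MvPowerSeries.coeff α E = c α * MvPowerSeries.coeff α F := by
          have := key F α (fun δ h1 h2 => hF01 δ (by omega))
          rw [← hG] at this
          exact this
        rw [hEα, hcα, zero_mul]
      · exact (mul_eq_zero.mp h0).resolve_left hcα
  apply MvPowerSeries.ext
  intro α
  rw [hEall _ α rfl, map_zero]
end

section
/- (Lower bound for the semiclassical resolvent at a barrier top: norm estimates of the quasimode.) Let 0 < α < 2β < 1/2, φ ∈ C_0^∞(ℝ) even with 0 ≤ φ ≤ 1, φ = 1 on [−1,1], supp φ ⊂ [−2,2], and χ ∈ C^∞((0,∞)) nondecreasing with χ(x) = x for 0 < x < 1 and χ(x) = 2 for x > 2. Define u(x) = Π_{j=1}^n e^{iλⱼxⱼ²/(2h)} φ(xⱼ/h^α) χ(h^β/|xⱼ|^{1/2}). Then there exist constants c, C > 0 such that for all small h > 0: c h^{βn} |ln h|^{n/2} ≤ ‖u‖_{L²(ℝⁿ)} ≤ C h^{βn} |ln h|^{n/2}, and ‖ |x|³ u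 ‖_{L²(ℝⁿ)} ≤ C h^{3α} h^{βn} |ln h|^{n/2}. -/
open MeasureTheory Real Set
open scoped ENNReal

set_option maxHeartbeats 1000000

section aux

lemma chi_bounds {χ : ℝ → ℝ} (hχmono : MonotoneOn χ (Set.Ioi 0))
    (hχid : ∀ t : ℝ, 0 < t → t < 1 → χ t = t)
    (hχ2 : ∀ t : ℝ, 2 < t → χ t = 2) :
    ∀ s : ℝ, 0 < s → 0 ≤ χ s ∧ χ s ≤ 2 := by
  intro s hs
  constructor
  · by_cases h1 : s < 1
    · rw [hχid s hs h1]; exact hs.le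
    · push_neg at h1
      have : χ (1/2) ≤ χ s := hχmono (by norm_num) hs (by linarith)
      rw [hχid (1/2) (by norm_num) (by norm_num)] at this
      linarith
  · by_cases h4 : s ≤ 4
    · have : χ s ≤ χ 4 := hχmono hs (by norm_num) h4
      rw [hχ2 4 (by norm_num)] at this; exact this
    · rw [hχ2 s (by linarith)]

/-- The one-dimensional quasimode profile estimate. -/
lemma oneD_estimate
    (α β : ℝ) (hα : 0 < α) (hαβ : α < 2 * β) (hβ : 2 * β < 1/2)
    (φ : ℝ → ℝ) (hφs : Continuous φ)
    (hφ01 : ∀ t, 0 ≤ φ t ∧ φ t ≤ 1)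
    (hφ1 : ∀ t ∈ Set.Icc (-1:ℝ) 1, φ t = 1)
    (hφsupp : tsupport φ ⊆ Set.Icc (-2:ℝ) 2)
    (χ : ℝ → ℝ) (hχs : ContDiffOn ℝ (⊤ : ℕ∞) χ (Set.Ioi 0))
    (hχmono : MonotoneOn χ (Set.Ioi 0))
    (hχid : ∀ t : ℝ, 0 < t → t < 1 → χ t = t)
    (hχ2 : ∀ t : ℝ, 2 < t → χ t = 2)
    (h : ℝ) (hh0 : 0 < h) (hh1 : h < Real.exp (-1)) :
    ∃ ψ : ℝ → ℝ, Continuous ψ ∧ HasCompactSupport ψ ∧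
      (∀ t : ℝ, t ≠ 0 → ψ t = φ (t / h ^ α) * χ (h ^ β / |t| ^ ((1:ℝ)/2))) ∧
      (∀ t : ℝ, 2 * h ^ α < |t| → ψ t = 0) ∧
      (2*β - α) * h ^ (2*β) * |Real.log h| ≤ ∫ t : ℝ, ψ t ^ 2 ∧
      ∫ t : ℝ, ψ t ^ 2 ≤ 11 * h ^ (2*β) * |Real.log h| := by
  -- basic notation
  set a : ℝ := h ^ α with ha_def
  set b : ℝ := h ^ (2*β) with hb_def
  have hh1' : h < 1 := lt_trans hh1 (by rw [← Real.exp_zero]; exact Real.exp_lt_exp.2 (by norm_num))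
  have ha : 0 < a := Real.rpow_pos_of_pos hh0 _
  have hb : 0 < b := Real.rpow_pos_of_pos hh0 _
  have hba : b < a := Real.rpow_lt_rpow_of_exponent_gt hh0 hh1' hαβ
  have hβpos : 0 < β := by linarith
  have hbpow : 0 < h ^ β := Real.rpow_pos_of_pos hh0 _
  have hlogneg : Real.log h < 0 := Real.log_neg hh0 hh1'
  have hLeq : |Real.log h| = - Real.log h := abs_of_neg hlogneg
  have hL1 : 1 ≤ |Real.log h| := by
    have : Real.log h < Real.log (Real.exp (-1)) := Real.log_lt_log hh0 hh1
    rw [Real.log_exp] at this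
    rw [hLeq]; linarith
  set L : ℝ := |Real.log h| with hL_def
  -- sqrt facts
  have hsb : Real.sqrt b = h ^ β := by
    rw [Real.sqrt_eq_rpow, hb_def, ← Real.rpow_mul hh0.le]
    congr 1; ring
  have habs : ∀ t : ℝ, |t| ^ ((1:ℝ)/2) = Real.sqrt |t| := fun t => (Real.sqrt_eq_rpow _).symm
  -- the modified profile
  set ψ : ℝ → ℝ := fun t =>
    if t = 0 then 2 * φ 0 else φ (t / a) * χ (h ^ β / |t| ^ ((1:ℝ)/2)) with hψ_def
  have hψeq : ∀ t : ℝ, t ≠ 0 → ψ t = φ (t / a) * χ (h ^ β / |t| ^ ((1:ℝ)/2)) := by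
    intro t ht; simp only [hψ_def, if_neg ht]
  have hφ0 : φ 0 = 1 := hφ1 0 ⟨by norm_num, by norm_num⟩
  -- positivity of the χ argument
  have hspos : ∀ t : ℝ, t ≠ 0 → 0 < h ^ β / |t| ^ ((1:ℝ)/2) := by
    intro t ht
    exact div_pos hbpow (Real.rpow_pos_of_pos (abs_pos.2 ht) _)
  -- near zero, ψ equals 2 * φ (t/a)
  have hnear : ∀ t : ℝ, |t| < b/4 → ψ t = 2 * φ (t / a) := by
    intro t ht
    by_cases ht0 : t = 0
    · simp [hψ_def, ht0]
    · rw [hψeq t ht0, habs]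
      have h2 : Real.sqrt (b/4) = h ^ β / 2 := by
        rw [Real.sqrt_div hb.le 4, hsb, show (4:ℝ) = 2^2 by norm_num,
          Real.sqrt_sq (by norm_num : (0:ℝ) ≤ 2)]
      have h1 : Real.sqrt |t| < h ^ β / 2 := by
        rw [← h2]; exact Real.sqrt_lt_sqrt (abs_nonneg t) ht
      have hsq : 0 < Real.sqrt |t| := Real.sqrt_pos.2 (abs_pos.2 ht0)
      have hgt2 : 2 < h ^ β / Real.sqrt |t| := by
        rw [lt_div_iff₀ hsq]; nlinarith
      rw [hχ2 _ hgt2]; ring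
  -- continuity
  have hψcont : Continuous ψ := by
    rw [continuous_iff_continuousAt]
    intro t
    by_cases ht0 : t = 0
    · subst ht0
      have hev : ∀ᶠ s in nhds (0:ℝ), (fun s => 2 * φ (s / a)) s = ψ s := by
        filter_upwards [Ioo_mem_nhds (by linarith : -(b/4) < (0:ℝ)) (by linarith : (0:ℝ) < b/4)]
          with s hs
        exact (hnear s (abs_lt.2 ⟨by linarith [hs.1], hs.2⟩)).symm
      exact ContinuousAt.congr
        ((continuous_const.mul (hφs.comp (continuous_id.div_const a))).continuousAt) hev
    · have hev : ∀ᶠ s in nhds t,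
          (fun s => φ (s / a) * χ (h ^ β / |s| ^ ((1:ℝ)/2))) s = ψ s := by
        filter_upwards [isOpen_compl_singleton.mem_nhds ht0] with s hs
        exact (hψeq s hs).symm
      refine ContinuousAt.congr ?_ hev
      apply ContinuousAt.mul
      · exact (hφs.comp (continuous_id.div_const a)).continuousAt
      · have harg : ContinuousAt (fun s : ℝ => h ^ β / |s| ^ ((1:ℝ)/2)) t := by
          apply ContinuousAt.div continuousAt_const
          · exact (Real.continuousAt_rpow_const _ _ (Or.inr (by norm_num))).comp
              continuous_abs.continuousAt
          · exact ne_of_gt (Real.rpow_pos_of_pos (abs_pos.2 ht0) _)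
        have hcc : ContinuousAt (χ ∘ (fun s : ℝ => h ^ β / |s| ^ ((1:ℝ)/2))) t :=
          ContinuousAt.comp (hχs.continuousOn.continuousAt (Ioi_mem_nhds (hspos t ht0))) harg
        exact hcc
  -- support
  have hsupp : ∀ t : ℝ, 2 * a < |t| → ψ t = 0 := by
    intro t ht
    have ht0 : t ≠ 0 := by
      intro h0; rw [h0, abs_zero] at ht; linarith
    rw [hψeq t ht0]
    have : φ (t / a) = 0 := by
      apply image_eq_zero_of_notMem_tsupport
      intro hmem
      have h2 := hφsupp hmem
      rw [mem_Icc] at h2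
      have habs2 : |t / a| ≤ 2 := abs_le.2 h2
      rw [abs_div, abs_of_pos ha, div_le_iff₀ ha] at habs2
      linarith
    rw [this, zero_mul]
  have hψcs : HasCompactSupport ψ := by
    apply HasCompactSupport.intro (isCompact_Icc (a := -(2*a)) (b := 2*a))
    intro x hx
    apply hsupp
    by_contra hle
    push_neg at hle
    exact hx (abs_le.1 hle)
  -- pointwise bound |ψ| ≤ 2
  have hbd : ∀ t : ℝ, |ψ t| ≤ 2 := by
    intro t
    by_cases ht0 : t = 0
    · rw [ht0]; simp [hψ_def, hφ0]
    · rw [hψeq t ht0, abs_mul]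
      have h1 := hφ01 (t / a)
      have h2 := chi_bounds hχmono hχid hχ2 _ (hspos t ht0)
      rw [abs_of_nonneg h1.1, abs_of_nonneg h2.1]
      nlinarith [h1.1, h1.2, h2.1, h2.2]
  -- value in the middle region
  have hmidχ : ∀ t : ℝ, b < |t| →
      χ (h ^ β / |t| ^ ((1:ℝ)/2)) = h ^ β / |t| ^ ((1:ℝ)/2) ∧
      (h ^ β / |t| ^ ((1:ℝ)/2)) ^ 2 = b / |t| := by
    intro t ht
    have ht0 : t ≠ 0 := by intro h0; rw [h0, abs_zero] at ht; linarith
    have hlt1 : h ^ β / |t| ^ ((1:ℝ)/2) < 1 := by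
      rw [habs, div_lt_one (Real.sqrt_pos.2 (abs_pos.2 ht0)), ← hsb]
      exact Real.sqrt_lt_sqrt hb.le ht
    constructor
    · exact hχid _ (hspos t ht0) hlt1
    · rw [habs, div_pow, ← hsb, Real.sq_sqrt hb.le, Real.sq_sqrt (abs_nonneg t)]
  have hmid : ∀ t : ℝ, b < |t| → ψ t ^ 2 ≤ b / |t| := by
    intro t ht
    have ht0 : t ≠ 0 := by intro h0; rw [h0, abs_zero] at ht; linarith
    obtain ⟨hc, hc2⟩ := hmidχ t ht
    rw [hψeq t ht0, hc, mul_pow, ← hc2]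
    have h1 := hφ01 (t / a)
    have hs2 : 0 ≤ (h ^ β / |t| ^ ((1:ℝ)/2)) ^ 2 := sq_nonneg _
    have hφsq : φ (t / a) ^ 2 ≤ 1 := by nlinarith [h1.1, h1.2]
    nlinarith [mul_le_mul_of_nonneg_right hφsq hs2]
  have hloweq : ∀ t : ℝ, t ∈ Ioo b a → ψ t ^ 2 = b / t := by
    intro t ht
    have htpos : 0 < t := lt_trans hb ht.1
    have ht0 : t ≠ 0 := ne_of_gt htpos
    have habs' : |t| = t := abs_of_pos htpos
    obtain ⟨hc, hc2⟩ := hmidχ t (by rw [habs']; exact ht.1)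
    have hφone : φ (t / a) = 1 := by
      apply hφ1
      constructor
      · have : 0 < t / a := div_pos htpos ha
        linarith
      · rw [div_le_one ha]; exact ht.2.le
    rw [hψeq t ht0, hc, hφone, one_mul, hc2, habs']
  -- integrability
  have hψ2cont : Continuous fun t => ψ t ^ 2 := hψcont.pow 2
  have hψ2cs : HasCompactSupport fun t => ψ t ^ 2 := by
    have : (fun t => ψ t ^ 2) = fun t => ψ t * ψ t := by ext t; ring
    rw [this]; exact hψcs.mul_right
  have hψ2int : Integrable (fun t => ψ t ^ 2) := hψ2cont.integrable_of_hasCompactSupport hψ2cs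
  -- interval integral of b / t over [x, y], 0 < x ≤ y
  have hIval : ∀ x y : ℝ, 0 < x → x ≤ y →
      ∫ t in Set.Ioo x y, b / t = b * Real.log (y / x) := by
    intro x y hx hxy
    rw [← integral_Ioc_eq_integral_Ioo, ← intervalIntegral.integral_of_le hxy]
    have heq : ∀ t : ℝ, b / t = b * (1 / t) := fun t => by ring
    simp_rw [heq]
    rw [intervalIntegral.integral_const_mul, integral_one_div]
    intro h0
    rw [Set.mem_uIcc] at h0
    rcases h0 with ⟨h01, h02⟩ | ⟨h01, h02⟩ <;> linarith
  -- lower bound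
  have hglow_int : Integrable ((Set.Ioo b a).indicator (fun t => b / t)) := by
    rw [integrable_indicator_iff measurableSet_Ioo]
    apply IntegrableOn.mono_set _ Set.Ioo_subset_Icc_self
    apply ContinuousOn.integrableOn_Icc
    apply ContinuousOn.div continuousOn_const continuousOn_id
    intro t ht
    rw [Set.mem_Icc] at ht
    exact ne_of_gt (lt_of_lt_of_le hb ht.1)
  have hlow_val : ∫ t : ℝ, (Set.Ioo b a).indicator (fun t => b / t) t
      = (2*β - α) * b * L := by
    rw [integral_indicator measurableSet_Ioo, hIval b a hb hba.le,
      Real.log_div (ne_of_gt ha) (ne_of_gt hb), ha_def, hb_def,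
      Real.log_rpow hh0, Real.log_rpow hh0]
    rw [hLeq]; ring
  have hlow : (2*β - α) * b * L ≤ ∫ t : ℝ, ψ t ^ 2 := by
    rw [← hlow_val]
    apply integral_mono hglow_int hψ2int
    intro t
    by_cases hmem : t ∈ Set.Ioo b a
    · rw [Set.indicator_of_mem hmem]
      exact le_of_eq (hloweq t hmem).symm
    · rw [Set.indicator_of_notMem hmem]; exact sq_nonneg _
  -- upper bound
  set g1 : ℝ → ℝ := (Set.Icc (-b) b).indicator (fun _ => (4:ℝ)) with hg1_def
  set g2 : ℝ → ℝ := (Set.Icc b (2*a)).indicator (fun t => b / t) with hg2_def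
  set g3 : ℝ → ℝ := (Set.Icc (-(2*a)) (-b)).indicator (fun t => b / (-t)) with hg3_def
  have hg1nn : ∀ t, 0 ≤ g1 t := fun t =>
    Set.indicator_nonneg (fun _ _ => by norm_num) t
  have hg2nn : ∀ t, 0 ≤ g2 t := fun t =>
    Set.indicator_nonneg (fun s hs =>
      div_nonneg hb.le (le_trans hb.le (Set.mem_Icc.1 hs).1)) t
  have hg3nn : ∀ t, 0 ≤ g3 t := fun t =>
    Set.indicator_nonneg (fun s hs => by
      have h2 := (Set.mem_Icc.1 hs).2
      apply div_nonneg hb.le; linarith) t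
  have hpt : ∀ t, ψ t ^ 2 ≤ g1 t + g2 t + g3 t := by
    intro t
    rcases le_or_gt |t| b with hcase | hcase
    · have hg1t : g1 t = 4 := by
        rw [hg1_def]
        exact Set.indicator_of_mem (Set.mem_Icc.2 (abs_le.1 hcase)) _
      have hb4 : ψ t ^ 2 ≤ 4 := by
        have h1 := hbd t
        calc ψ t ^ 2 = |ψ t| ^ 2 := (sq_abs _).symm
          _ ≤ 2 ^ 2 := pow_le_pow_left₀ (abs_nonneg _) h1 2
          _ = 4 := by norm_num
      linarith [hg2nn t, hg3nn t]
    · rcases le_or_gt |t| (2*a) with hcase2 | hcase2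
      · have hm := hmid t hcase
        rcases lt_trichotomy t 0 with htneg | hteq | htpos
        · have habs' : |t| = -t := abs_of_neg htneg
          rw [habs'] at hcase hcase2 hm
          have hg3t : g3 t = b / (-t) := by
            rw [hg3_def]
            exact Set.indicator_of_mem (Set.mem_Icc.2 ⟨by linarith, by linarith⟩) _
          rw [hg3t] at *
          linarith [hg1nn t, hg2nn t]
        · exfalso; rw [hteq, abs_zero] at hcase; linarith
        · have habs' : |t| = t := abs_of_pos htpos
          rw [habs'] at hcase hcase2 hm
          have hg2t : g2 t = b / t := by
            rw [hg2_def]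
            exact Set.indicator_of_mem (Set.mem_Icc.2 ⟨hcase.le, hcase2⟩) _
          rw [hg2t]
          linarith [hg1nn t, hg3nn t]
      · have hz : ψ t ^ 2 = 0 := by rw [hsupp t hcase2]; ring
        rw [hz]
        linarith [hg1nn t, hg2nn t, hg3nn t]
  have hg1int : Integrable g1 := by
    rw [hg1_def, integrable_indicator_iff measurableSet_Icc]
    exact integrableOn_const (by rw [Real.volume_Icc]; exact ENNReal.ofReal_ne_top)
  have hg2int : Integrable g2 := by
    rw [hg2_def, integrable_indicator_iff measurableSet_Icc]
    apply ContinuousOn.integrableOn_Icc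
    apply ContinuousOn.div continuousOn_const continuousOn_id
    intro t ht
    exact ne_of_gt (lt_of_lt_of_le hb (Set.mem_Icc.1 ht).1)
  have hg3int : Integrable g3 := by
    rw [hg3_def, integrable_indicator_iff measurableSet_Icc]
    apply ContinuousOn.integrableOn_Icc
    apply ContinuousOn.div continuousOn_const continuousOn_id.neg
    intro t ht
    have h2 := (Set.mem_Icc.1 ht).2
    have hnt : (0:ℝ) < -t := by linarith
    simp only [id_eq, Pi.neg_apply]
    exact ne_of_gt hnt
  have hg1val : ∫ t : ℝ, g1 t = 8 * b := by
    rw [hg1_def, integral_indicator_const (4:ℝ) measurableSet_Icc,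
      Real.volume_real_Icc_of_le (by linarith)]
    simp only [smul_eq_mul]; ring
  have hg2val : ∫ t : ℝ, g2 t = b * Real.log (2*a/b) := by
    rw [hg2_def, integral_indicator measurableSet_Icc, integral_Icc_eq_integral_Ioc,
      integral_Ioc_eq_integral_Ioo, hIval b (2*a) hb (by linarith)]
  have hg3val : ∫ t : ℝ, g3 t = b * Real.log (2*a/b) := by
    rw [hg3_def, integral_indicator measurableSet_Icc, integral_Icc_eq_integral_Ioc,
      ← intervalIntegral.integral_of_le (by linarith : -(2*a) ≤ -b)]
    have hcn := intervalIntegral.integral_comp_neg (a := -(2*a)) (b := -b) (fun x : ℝ => b / x)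
    rw [neg_neg, neg_neg] at hcn
    rw [hcn, intervalIntegral.integral_of_le (by linarith : b ≤ 2*a),
      integral_Ioc_eq_integral_Ioo, hIval b (2*a) hb (by linarith)]
  have hup : ∫ t : ℝ, ψ t ^ 2 ≤ 11 * b * L := by
    have hsum : ∫ t : ℝ, ψ t ^ 2 ≤ ∫ t : ℝ, (g1 t + g2 t + g3 t) :=
      integral_mono hψ2int ((hg1int.add hg2int).add hg3int) hpt
    have h12 : Integrable (fun t : ℝ => g1 t + g2 t) := hg1int.add hg2int
    rw [integral_add h12 hg3int, integral_add hg1int hg2int,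
      hg1val, hg2val, hg3val] at hsum
    have hlog2a : Real.log (2*a/b) = Real.log 2 + (2*β - α) * L := by
      rw [show 2*a/b = 2*(a/b) by ring,
        Real.log_mul (by norm_num) (ne_of_gt (div_pos ha hb)),
        Real.log_div (ne_of_gt ha) (ne_of_gt hb), ha_def, hb_def,
        Real.log_rpow hh0, Real.log_rpow hh0, hLeq]
      ring
    rw [hlog2a] at hsum
    have hlog2 : Real.log 2 < 1 := by
      have := Real.log_two_lt_d9; linarith
    have hlog2nn : 0 ≤ Real.log 2 := Real.log_nonneg (by norm_num)
    have e1 : 8 * b ≤ 8 * (b * L) := by nlinarith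
    have e2 : b * Real.log 2 ≤ b * L :=
      mul_le_mul_of_nonneg_left (by linarith) hb.le
    have e3 : b * ((2*β - α) * L) ≤ b * ((1/2) * L) :=
      mul_le_mul_of_nonneg_left
        (mul_le_mul_of_nonneg_right (by linarith) (by linarith)) hb.le
    nlinarith
  exact ⟨ψ, hψcont, hψcs, hψeq, hsupp, hlow, hup⟩

end aux


/-- The quasimode `u(x) = Πⱼ e^{iλⱼxⱼ²/(2h)} φ(xⱼ/h^α) χ(h^β/|xⱼ|^{1/2})`. -/
noncomputable def quasimode {n : ℕ} (lam : Fin n → ℝ) (φ χ : ℝ → ℝ) (α β h : ℝ)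
    (x : EuclideanSpace ℝ (Fin n)) : ℂ :=
  ∏ j : Fin n,
    Complex.exp (Complex.I * (lam j) * (x j)^2 / (2*h))
      * (φ (x j / h ^ α) : ℂ) * (χ (h ^ β / |x j| ^ ((1:ℝ)/2)) : ℂ)

/-- for `0 < α < 2β < 1/2`, `φ` an even smooth cutoff and `χ` a smooth
nondecreasing truncation as described, the quasimode `u` satisfies
`c h^{βn}|ln h|^{n/2} ≤ ‖u‖_{L²} ≤ C h^{βn}|ln h|^{n/2}` and
`‖|x|³u‖_{L²} ≤ C h^{3α} h^{βn}|ln h|^{n/2}` for all small `h > 0`. -/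
theorem quasimode_norm_estimates
    {n : ℕ} (hn : 0 < n) (lam : Fin n → ℝ) (hpos : ∀ j, 0 < lam j)
    (α β : ℝ) (hα : 0 < α) (hαβ : α < 2 * β) (hβ : 2 * β < 1/2)
    (φ : ℝ → ℝ) (hφs : ContDiff ℝ (⊤ : ℕ∞) φ) (hφc : HasCompactSupport φ)
    (hφeven : ∀ t, φ (-t) = φ t) (hφ01 : ∀ t, 0 ≤ φ t ∧ φ t ≤ 1)
    (hφ1 : ∀ t ∈ Set.Icc (-1:ℝ) 1, φ t = 1)
    (hφsupp : tsupport φ ⊆ Set.Icc (-2:ℝ) 2)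
    (χ : ℝ → ℝ) (hχs : ContDiffOn ℝ (⊤ : ℕ∞) χ (Set.Ioi 0))
    (hχmono : MonotoneOn χ (Set.Ioi 0))
    (hχid : ∀ t : ℝ, 0 < t → t < 1 → χ t = t)
    (hχ2 : ∀ t : ℝ, 2 < t → χ t = 2) :
    ∃ c C h₀ : ℝ, 0 < c ∧ 0 < C ∧ 0 < h₀ ∧
      ∀ h : ℝ, 0 < h → h < h₀ →
        ENNReal.ofReal (c * h ^ (β * n) * |Real.log h| ^ ((n : ℝ)/2))
            ≤ eLpNorm (quasimode lam φ χ α β h) 2 volume ∧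
        eLpNorm (quasimode lam φ χ α β h) 2 volume
            ≤ ENNReal.ofReal (C * h ^ (β * n) * |Real.log h| ^ ((n : ℝ)/2)) ∧
        eLpNorm (fun x : EuclideanSpace ℝ (Fin n) =>
              (‖x‖ : ℂ)^3 * quasimode lam φ χ α β h x) 2 volume
            ≤ ENNReal.ofReal (C * h ^ (3*α) * h ^ (β * n) * |Real.log h| ^ ((n : ℝ)/2)) := by
  refine ⟨(2*β - α) ^ ((n:ℝ)/2), (1 + 8 * Real.sqrt n ^ 3) * 11 ^ ((n:ℝ)/2),
    Real.exp (-1), Real.rpow_pos_of_pos (by linarith) _, by positivity, Real.exp_pos _, ?_⟩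
  intro h hh0 hh1
  obtain ⟨ψ, hψcont, hψcs, hψeq, hψsupp, hlow, hup⟩ :=
    oneD_estimate α β hα hαβ hβ φ hφs.continuous hφ01 hφ1 hφsupp χ hχs hχmono hχid hχ2 h hh0 hh1
  have hh1' : h < 1 := lt_trans hh1 (by
    rw [← Real.exp_zero]; exact Real.exp_lt_exp.2 (by norm_num))
  have hlogneg : Real.log h < 0 := Real.log_neg hh0 hh1'
  set L : ℝ := |Real.log h| with hL_def
  have hLpos : 0 < L := abs_pos.2 (ne_of_lt hlogneg)
  have hPnn : 0 ≤ h ^ (2*β) * L := by positivity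
  set I : ℝ := ∫ t : ℝ, ψ t ^ 2 with hI_def
  have hInn : 0 ≤ I := integral_nonneg fun t => sq_nonneg _
  -- the functions on the pi space
  set v : (Fin n → ℝ) → ℂ := fun y =>
    ∏ j : Fin n, Complex.exp (Complex.I * (lam j) * (y j)^2 / (2*h)) * ((ψ (y j) : ℝ) : ℂ)
    with hv_def
  set w : (Fin n → ℝ) → ℂ := fun y =>
    ∏ j : Fin n, Complex.exp (Complex.I * (lam j) * (y j)^2 / (2*h))
      * (φ (y j / h ^ α) : ℂ) * (χ (h ^ β / |y j| ^ ((1:ℝ)/2)) : ℂ) with hw_def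
  have hquw : quasimode lam φ χ α β h
      = w ∘ ⇑(MeasurableEquiv.toLp 2 (Fin n → ℝ)).symm := rfl
  have hwv : w =ᵐ[volume] v := by
    have hae : ∀ᵐ y : (Fin n → ℝ) ∂volume, ∀ j, y j ≠ 0 := by
      rw [ae_all_iff]
      intro j
      rw [volume_pi]
      exact MeasureTheory.Measure.ae_eval_ne _ j 0
    filter_upwards [hae] with y hy
    rw [hw_def, hv_def]
    apply Finset.prod_congr rfl
    intro j _
    rw [hψeq (y j) (hy j)]
    push_cast
    ring
  have hv_cont : Continuous v := by
    apply continuous_finset_prod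
    intro j _
    apply Continuous.mul
    · apply Complex.continuous_exp.comp
      apply Continuous.div_const
      exact continuous_const.mul ((Complex.continuous_ofReal.comp (continuous_apply j)).pow 2)
    · exact Complex.continuous_ofReal.comp (hψcont.comp (continuous_apply j))
  have hv_cs : HasCompactSupport v := by
    apply HasCompactSupport.intro
      (isCompact_univ_pi (fun _ : Fin n => isCompact_Icc (a := -(2*h^α)) (b := 2*h^α)))
    intro y hy
    rw [Set.mem_univ_pi] at hy
    push_neg at hy
    obtain ⟨j, hj⟩ := hy
    have habs : 2 * h ^ α < |y j| := by
      rw [Set.mem_Icc] at hj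
      by_contra hle
      push_neg at hle
      exact hj (abs_le.1 hle)
    rw [hv_def]
    apply Finset.prod_eq_zero (Finset.mem_univ j)
    rw [hψsupp (y j) habs]
    simp
  have hMem : MemLp v 2 volume := hv_cont.memLp_of_hasCompactSupport hv_cs
  -- norm identity
  have hnormv : ∀ y : Fin n → ℝ, ‖v y‖ ^ ((2:ℝ≥0∞)).toReal = ∏ j : Fin n, ψ (y j) ^ 2 := by
    intro y
    rw [ENNReal.toReal_ofNat, show ((2:ℝ)) = ((2:ℕ):ℝ) by norm_num, Real.rpow_natCast]
    rw [hv_def, norm_prod, ← Finset.prod_pow]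
    apply Finset.prod_congr rfl
    intro j _
    rw [norm_mul]
    have hexp : ‖Complex.exp (Complex.I * (lam j) * ((y j):ℂ)^2 / (2*h))‖ = 1 := by
      have heq : Complex.I * (lam j) * ((y j):ℂ)^2 / (2*(h:ℂ))
          = ((lam j * (y j)^2 / (2*h) : ℝ) : ℂ) * Complex.I := by
        push_cast; ring
      rw [heq, Complex.norm_exp_ofReal_mul_I]
    rw [hexp, one_mul, Complex.norm_real, Real.norm_eq_abs, sq_abs]
  have hvnorm : eLpNorm v 2 volume = ENNReal.ofReal ((I ^ n) ^ ((2:ℝ)⁻¹)) := by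
    rw [hMem.eLpNorm_eq_integral_rpow_norm (by norm_num) (by norm_num)]
    have hInt : (∫ y : Fin n → ℝ, ‖v y‖ ^ ((2:ℝ≥0∞)).toReal) = I ^ n := by
      simp_rw [hnormv]
      rw [volume_pi, MeasureTheory.integral_fintype_prod_eq_pow (fun t : ℝ => ψ t ^ 2),
        Fintype.card_fin]
    rw [hInt, ENNReal.toReal_ofNat]
  have hnorm_eq : eLpNorm (quasimode lam φ χ α β h) 2 volume
      = ENNReal.ofReal ((I ^ n) ^ ((2:ℝ)⁻¹)) := by
    rw [hquw, eLpNorm_comp_measurePreserving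
      (hv_cont.aestronglyMeasurable.congr hwv.symm)
      (EuclideanSpace.volume_preserving_symm_measurableEquiv_toLp (Fin n)),
      eLpNorm_congr_ae hwv, hvnorm]
  -- the rpow algebra
  have key : ∀ x : ℝ, 0 ≤ x →
      ((x * (h ^ (2*β) * L)) ^ n) ^ ((2:ℝ)⁻¹)
        = x ^ ((n:ℝ)/2) * h ^ (β * (n:ℝ)) * L ^ ((n:ℝ)/2) := by
    intro x hx
    have hXnn : (0:ℝ) ≤ x * (h ^ (2*β) * L) := mul_nonneg hx hPnn
    rw [← Real.rpow_natCast (x * (h ^ (2*β) * L)) n]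
    rw [← Real.rpow_mul hXnn]
    rw [Real.mul_rpow hx hPnn]
    rw [Real.mul_rpow (by positivity : (0:ℝ) ≤ h ^ (2*β)) hLpos.le]
    rw [← Real.rpow_mul hh0.le]
    have e1 : (n:ℝ) * (2:ℝ)⁻¹ = (n:ℝ)/2 := by ring
    have e2 : 2*β*((n:ℝ) * (2:ℝ)⁻¹) = β * (n:ℝ) := by ring
    rw [e2, e1]
    ring
  -- tight upper bound
  have hupper_tight : eLpNorm (quasimode lam φ χ α β h) 2 volume
      ≤ ENNReal.ofReal (11 ^ ((n:ℝ)/2) * h ^ (β * (n:ℝ)) * L ^ ((n:ℝ)/2)) := by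
    rw [hnorm_eq]
    apply ENNReal.ofReal_le_ofReal
    have h1 : I ^ n ≤ (11 * (h ^ (2*β) * L)) ^ n := by
      apply pow_le_pow_left₀ hInn
      rw [← mul_assoc]; exact hup
    calc (I ^ n) ^ ((2:ℝ)⁻¹) ≤ ((11 * (h ^ (2*β) * L)) ^ n) ^ ((2:ℝ)⁻¹) :=
          Real.rpow_le_rpow (by positivity) h1 (by norm_num)
      _ = 11 ^ ((n:ℝ)/2) * h ^ (β * (n:ℝ)) * L ^ ((n:ℝ)/2) := key 11 (by norm_num)
  have hone_le : (1:ℝ) ≤ 1 + 8 * Real.sqrt n ^ 3 := by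
    nlinarith [Real.sqrt_nonneg (n:ℝ), pow_nonneg (Real.sqrt_nonneg (n:ℝ)) 3]
  have hCnn : (0:ℝ) ≤ (1 + 8 * Real.sqrt n ^ 3) := by linarith
  refine ⟨?_, ?_, ?_⟩
  · -- lower bound
    rw [hnorm_eq]
    apply ENNReal.ofReal_le_ofReal
    have h1 : ((2*β - α) * (h ^ (2*β) * L)) ^ n ≤ I ^ n := by
      apply pow_le_pow_left₀ (mul_nonneg (by linarith) hPnn)
      rw [← mul_assoc]; exact hlow
    calc (2*β - α) ^ ((n:ℝ)/2) * h ^ (β * (n:ℝ)) * L ^ ((n:ℝ)/2)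
        = (((2*β - α) * (h ^ (2*β) * L)) ^ n) ^ ((2:ℝ)⁻¹) := (key _ (by linarith)).symm
      _ ≤ (I ^ n) ^ ((2:ℝ)⁻¹) :=
          Real.rpow_le_rpow (pow_nonneg (mul_nonneg (by linarith) hPnn) n) h1 (by norm_num)
  · -- upper bound
    refine le_trans hupper_tight (ENNReal.ofReal_le_ofReal ?_)
    have h3 : 11 ^ ((n:ℝ)/2) ≤ (1 + 8 * Real.sqrt n ^ 3) * 11 ^ ((n:ℝ)/2) :=
      le_mul_of_one_le_left (by positivity) hone_le
    have := mul_le_mul_of_nonneg_right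
      (mul_le_mul_of_nonneg_right h3 (by positivity : (0:ℝ) ≤ h ^ (β * (n:ℝ))))
      (by positivity : (0:ℝ) ≤ L ^ ((n:ℝ)/2))
    exact this
  · -- weighted bound
    set K : ℝ := (2 * Real.sqrt n * h ^ α) ^ 3 with hK_def
    have hapos : 0 < h ^ α := Real.rpow_pos_of_pos hh0 α
    have hKnn : 0 ≤ K := by positivity
    have hφzero : ∀ t : ℝ, 2 * h ^ α < |t| → φ (t / h ^ α) = 0 := by
      intro t ht
      apply image_eq_zero_of_notMem_tsupport
      intro hmem
      have h2 := hφsupp hmem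
      rw [Set.mem_Icc] at h2
      have habs2 : |t / h ^ α| ≤ 2 := abs_le.2 h2
      rw [abs_div, abs_of_pos hapos, div_le_iff₀ hapos] at habs2
      linarith
    have hKc : ‖(K:ℂ)‖ = K := by
      rw [Complex.norm_real, Real.norm_eq_abs, abs_of_nonneg hKnn]
    have hptw : ∀ x : EuclideanSpace ℝ (Fin n),
        ‖(‖x‖:ℂ)^3 * quasimode lam φ χ α β h x‖
          ≤ ‖((K:ℂ) • quasimode lam φ χ α β h) x‖ := by
      intro x
      rw [Pi.smul_apply, smul_eq_mul, norm_mul, norm_mul, hKc]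
      by_cases hall : ∀ j, |x j| ≤ 2 * h ^ α
      · have hxnorm : ‖x‖ ≤ 2 * Real.sqrt n * h ^ α := by
          rw [EuclideanSpace.norm_eq]
          have hsum : (∑ j, ‖x j‖^2) ≤ (n:ℝ) * (2*h^α)^2 := by
            calc ∑ j, ‖x j‖^2 ≤ ∑ _j : Fin n, (2*h^α)^2 := by
                  apply Finset.sum_le_sum
                  intro j _
                  rw [Real.norm_eq_abs]
                  exact pow_le_pow_left₀ (abs_nonneg _) (hall j) 2
              _ = (n:ℝ) * (2*h^α)^2 := by
                  rw [Finset.sum_const, Finset.card_univ, Fintype.card_fin, nsmul_eq_mul]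
          calc √(∑ j, ‖x j‖^2) ≤ √((n:ℝ)*(2*h^α)^2) := Real.sqrt_le_sqrt hsum
            _ = 2 * √(n:ℝ) * h^α := by
                rw [Real.sqrt_mul (Nat.cast_nonneg n), Real.sqrt_sq (by positivity)]
                ring
        have hnormcube : ‖((‖x‖:ℝ):ℂ)^3‖ ≤ K := by
          rw [norm_pow, Complex.norm_real, Real.norm_eq_abs, abs_norm, hK_def]
          exact pow_le_pow_left₀ (norm_nonneg x) hxnorm 3
        exact mul_le_mul_of_nonneg_right hnormcube (norm_nonneg _)
      · push_neg at hall
        obtain ⟨j, hj⟩ := hall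
        have hq0 : quasimode lam φ χ α β h x = 0 := by
          apply Finset.prod_eq_zero (Finset.mem_univ j)
          rw [hφzero (x j) hj]
          simp
        rw [hq0]
        simp
    have hKnnE : (‖(K:ℂ)‖₊ : ℝ≥0∞) = ENNReal.ofReal K := by
      rw [← enorm_eq_nnnorm, ← ofReal_norm, hKc]
    have hKval : K = 8 * Real.sqrt (n:ℝ) ^ 3 * h ^ (3*α) := by
      rw [hK_def, mul_pow, mul_pow, ← Real.rpow_natCast (h ^ α) 3, ← Real.rpow_mul hh0.le,
        show α * ((3:ℕ):ℝ) = 3*α by push_cast; ring]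
      norm_num
    calc eLpNorm (fun x : EuclideanSpace ℝ (Fin n) =>
            (‖x‖:ℂ)^3 * quasimode lam φ χ α β h x) 2 volume
        ≤ eLpNorm ((K:ℂ) • quasimode lam φ χ α β h) 2 volume := eLpNorm_mono hptw
      _ = (‖(K:ℂ)‖₊ : ℝ≥0∞) * eLpNorm (quasimode lam φ χ α β h) 2 volume :=
          eLpNorm_const_smul _ _ _ _
      _ ≤ ENNReal.ofReal K * ENNReal.ofReal (11 ^ ((n:ℝ)/2) * h ^ (β * (n:ℝ)) * L ^ ((n:ℝ)/2)) := by
          rw [hKnnE]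
          exact mul_le_mul_right hupper_tight _
      _ = ENNReal.ofReal (K * (11 ^ ((n:ℝ)/2) * h ^ (β * (n:ℝ)) * L ^ ((n:ℝ)/2))) :=
          (ENNReal.ofReal_mul hKnn).symm
      _ ≤ ENNReal.ofReal ((1 + 8 * Real.sqrt n ^ 3) * 11 ^ ((n:ℝ)/2) * h ^ (3*α)
            * h ^ (β * (n:ℝ)) * L ^ ((n:ℝ)/2)) := by
          apply ENNReal.ofReal_le_ofReal
          rw [hKval]
          have h8 : 8 * Real.sqrt (n:ℝ) ^ 3 ≤ 1 + 8 * Real.sqrt (n:ℝ) ^ 3 := by linarith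
          have hfac : (0:ℝ) ≤ h ^ (3*α) * (11 ^ ((n:ℝ)/2) * h ^ (β * (n:ℝ)) * L ^ ((n:ℝ)/2)) := by
            positivity
          nlinarith [mul_le_mul_of_nonneg_right h8 hfac]
end
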